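/- arXiv:2001.05196 — 2 statements merged into one kernel-verified Lean document; each statement's English description precedes it below -/
import Mathlib

section
/- If (x,y) ∈ Δ^n × Δ^n satisfies q_k(x,y) = 0 for all k = 1,…,ℓ, then the strategy profile (z,x,y), where z is uniform on S_1, is a Nash equilibrium of the game G_0 in which every player receives payoff 0. Conversely, if (z,x,y) is a Nash equilibrium of G_0 in which every player receives payoff 0, then q_k(x,y) = 0 for all k. -/
open Finset

noncomputable section

/-- The sign associated to `s ∈ {1,−1}`, with `true` = +1 and `false` = −1. -/
def sgn (s : Bool) : ℝ := if s then 1 else -1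

/-- A mixed strategy: a probability distribution on a finite action set. -/
def IsDist {α : Type*} [Fintype α] (x : α → ℝ) : Prop :=
  (∀ i, 0 ≤ x i) ∧ ∑ i, x i = 1

variable {n ℓ : ℕ}

/-- The homogeneous bilinear form `q_k(x,y) = Σ_{i,j} a_{ij}^{(k)} x_i y_j`. -/
def qform (a : Fin ℓ → Fin (n+1) → Fin (n+1) → ℤ) (k : Fin ℓ)
    (x y : Fin (n+1) → ℝ) : ℝ :=
  ∑ i, ∑ j, (a k i j : ℝ) * x i * y j

/-- Payoff to Player 1 in the game G₀ on the pure profile ((s,k),i,j). -/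
def pay1 (a : Fin ℓ → Fin (n+1) → Fin (n+1) → ℤ)
    (sk : Bool × Fin ℓ) (i j : Fin (n+1)) : ℝ :=
  2 * sgn sk.1 * (a sk.2 i j : ℝ)

/-- Payoff to Player 2 (and to Player 3) in G₀ on the pure profile ((s,k),i,j). -/
def pay23 (a : Fin ℓ → Fin (n+1) → Fin (n+1) → ℤ)
    (sk : Bool × Fin ℓ) (i j : Fin (n+1)) : ℝ :=
  -(sgn sk.1 * (a sk.2 i j : ℝ))

/-- Expected payoff in G₀ for a payoff table `f` under a mixed profile (z,x,y). -/
def Eg (f : Bool × Fin ℓ → Fin (n+1) → Fin (n+1) → ℝ)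
    (z : Bool × Fin ℓ → ℝ) (x y : Fin (n+1) → ℝ) : ℝ :=
  ∑ sk, ∑ i, ∑ j, z sk * x i * y j * f sk i j

/-- `(z,x,y)` is a (mixed) Nash equilibrium of the zero-sum game G₀. -/
def G0NE (a : Fin ℓ → Fin (n+1) → Fin (n+1) → ℤ)
    (z : Bool × Fin ℓ → ℝ) (x y : Fin (n+1) → ℝ) : Prop :=
  IsDist z ∧ IsDist x ∧ IsDist y ∧
  (∀ z', IsDist z' → Eg (pay1 a) z' x y ≤ Eg (pay1 a) z x y) ∧
  (∀ x', IsDist x' → Eg (pay23 a) z x' y ≤ Eg (pay23 a) z x y) ∧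
  (∀ y', IsDist y' → Eg (pay23 a) z x y' ≤ Eg (pay23 a) z x y)

/-- The uniform distribution on Player 1's action set {1,−1}×{1,…,ℓ}. -/
def unif (ℓ : ℕ) : Bool × Fin ℓ → ℝ := fun _ => 1 / (2 * ℓ)

end

/-! Player 1's expected payoff is `Σ_{(s,k)} z_{(s,k)} · 2s · q_k(x,y)`, and `u₁ = -2 u₂ = -2 u₃`.
If every `q_k(x,y)` vanishes, all expected payoffs vanish whatever Player 1 plays, and under the
uniform `z` the terms for `s = ±1` cancel, so Players 2 and 3 get `0` whatever they play.
Conversely, at an equilibrium of value `0`, Player 1's pure deviations to `(±1, k)` earn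
`±2 q_k(x,y) ≤ 0`, forcing `q_k(x,y) = 0`. -/

lemma isDist_pi_single {α : Type*} [Fintype α] [DecidableEq α] (p : α) :
    IsDist (Pi.single p 1 : α → ℝ) :=
  ⟨fun i => by by_cases h : i = p <;> simp [h], by simp⟩

lemma isDist_unif {ℓ : ℕ} (hℓ : 0 < ℓ) : IsDist (unif ℓ) := by
  refine ⟨fun _ => by unfold unif; positivity, ?_⟩
  have hℓ' : (ℓ : ℝ) ≠ 0 := by positivity
  simp only [unif, sum_const, card_univ, Fintype.card_prod, Fintype.card_bool, Fintype.card_fin,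
    nsmul_eq_mul]
  push_cast
  field_simp

section Payoffs

variable {n ℓ : ℕ} (a : Fin ℓ → Fin (n+1) → Fin (n+1) → ℤ)

lemma Eg_pay1_eq_sum_qform (z : Bool × Fin ℓ → ℝ) (x y : Fin (n+1) → ℝ) :
    Eg (pay1 a) z x y = ∑ sk, z sk * (2 * sgn sk.1 * qform a sk.2 x y) := by
  simp only [Eg, pay1, qform, mul_sum]
  exact sum_congr rfl fun _ _ => sum_congr rfl fun _ _ => sum_congr rfl fun _ _ => by ring

lemma Eg_pay1_eq_neg_two_mul_Eg_pay23 (z : Bool × Fin ℓ → ℝ) (x y : Fin (n+1) → ℝ) :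
    Eg (pay1 a) z x y = -2 * Eg (pay23 a) z x y := by
  simp only [Eg, pay1, pay23, mul_sum]
  exact sum_congr rfl fun _ _ => sum_congr rfl fun _ _ => sum_congr rfl fun _ _ => by ring

lemma Eg_pay1_pi_single (p : Bool × Fin ℓ) (x y : Fin (n+1) → ℝ) :
    Eg (pay1 a) (Pi.single p 1) x y = 2 * sgn p.1 * qform a p.2 x y := by
  rw [Eg_pay1_eq_sum_qform, Fintype.sum_eq_single p fun sk h => by simp [h]]
  simp

lemma Eg_pay1_unif (x y : Fin (n+1) → ℝ) : Eg (pay1 a) (unif ℓ) x y = 0 := by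
  rw [Eg_pay1_eq_sum_qform, Fintype.sum_prod_type, Fintype.sum_bool, ← sum_add_distrib]
  exact sum_eq_zero fun _ _ => by simp only [sgn, unif, if_true, Bool.false_eq_true, if_false]; ring

lemma Eg_pay23_unif (x y : Fin (n+1) → ℝ) : Eg (pay23 a) (unif ℓ) x y = 0 := by
  linarith [Eg_pay1_eq_neg_two_mul_Eg_pay23 a (unif ℓ) x y, Eg_pay1_unif a x y]

variable {a} {x y : Fin (n+1) → ℝ}

lemma Eg_pay1_eq_zero_of_qform (hq : ∀ k, qform a k x y = 0) (z : Bool × Fin ℓ → ℝ) :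
    Eg (pay1 a) z x y = 0 := by
  simp [Eg_pay1_eq_sum_qform, hq]

lemma Eg_pay23_eq_zero_of_qform (hq : ∀ k, qform a k x y = 0) (z : Bool × Fin ℓ → ℝ) :
    Eg (pay23 a) z x y = 0 := by
  linarith [Eg_pay1_eq_neg_two_mul_Eg_pay23 a z x y, Eg_pay1_eq_zero_of_qform hq z]

lemma qform_eq_zero_of_Eg_pay1_nonpos (h : ∀ z, IsDist z → Eg (pay1 a) z x y ≤ 0) (k : Fin ℓ) :
    qform a k x y = 0 := by
  have hpos := h _ (isDist_pi_single (true, k))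
  have hneg := h _ (isDist_pi_single (false, k))
  simp only [Eg_pay1_pi_single, sgn, if_true, Bool.false_eq_true, if_false] at hpos hneg
  linarith

end Payoffs

/-- If (x,y) ∈ Δⁿ × Δⁿ satisfies q_k(x,y) = 0 for all k, then (unif,x,y) is a Nash
equilibrium of G₀ in which every player receives payoff 0. Conversely, if (z,x,y)
is a Nash equilibrium of G₀ in which every player receives payoff 0, then
q_k(x,y) = 0 for all k. -/
theorem stmt13 {n ℓ : ℕ} (hℓ : 0 < ℓ) (a : Fin ℓ → Fin (n+1) → Fin (n+1) → ℤ) :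
    (∀ x y : Fin (n+1) → ℝ, IsDist x → IsDist y →
      (∀ k, qform a k x y = 0) →
      G0NE a (unif ℓ) x y ∧
        Eg (pay1 a) (unif ℓ) x y = 0 ∧ Eg (pay23 a) (unif ℓ) x y = 0) ∧
    (∀ (z : Bool × Fin ℓ → ℝ) (x y : Fin (n+1) → ℝ),
      G0NE a z x y → Eg (pay1 a) z x y = 0 → Eg (pay23 a) z x y = 0 →
      ∀ k, qform a k x y = 0) := by
  refine ⟨fun x y hx hy hq => ?_, fun z x y hne h1 _ => ?_⟩
  · have h1 := Eg_pay1_eq_zero_of_qform hq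
    have h23 := Eg_pay23_eq_zero_of_qform hq
    refine ⟨⟨isDist_unif hℓ, hx, hy, fun z' _ => ?_, fun x' _ => ?_, fun y' _ => ?_⟩,
      h1 _, h23 _⟩
    · rw [h1, h1]
    · rw [h23, Eg_pay23_unif]
    · rw [h23, Eg_pay23_unif]
  · obtain ⟨-, -, -, hbest, -, -⟩ := hne
    exact qform_eq_zero_of_Eg_pay1_nonpos fun z' hz' => h1 ▸ hbest z' hz'
end

section
/- Consider the game G_1 obtained from G_0 by giving every player an extra action ⊥, with payoffs equal to G_0 when no one plays ⊥, and otherwise equal to the payoffs of H1 (treating any non-⊥ action as G). Then the pure profile (⊥,⊥,⊥) is a Nash equilibrium of G_1, and every other Nash equilibrium of G_1 is a Nash equilibrium of G_0 in which every player receives payoff 0. -/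
open Finset

noncomputable section

variable {n ℓ : ℕ}

/-- Payoff to Player 1 in G₁: as in G₀ when nobody plays ⊥ (`none`), otherwise as
in H1 (treating any non-⊥ action as G). -/
def pay1G1 (a : Fin ℓ → Fin (n+1) → Fin (n+1) → ℤ) :
    Option (Bool × Fin ℓ) → Option (Fin (n+1)) → Option (Fin (n+1)) → ℝ
  | some sk, some i, some j => pay1 a sk i j
  | some _,  some _, none   => 1
  | some _,  none,   some _ => 1
  | some _,  none,   none   => -4
  | none,    some _, some _ => 0
  | none,    some _, none   => 2
  | none,    none,   some _ => 2
  | none,    none,   none   => -2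

/-- Payoff to Player 2 in G₁. -/
def pay2G1 (a : Fin ℓ → Fin (n+1) → Fin (n+1) → ℤ) :
    Option (Bool × Fin ℓ) → Option (Fin (n+1)) → Option (Fin (n+1)) → ℝ
  | some sk, some i, some j => pay23 a sk i j
  | some _,  some _, none   => -1
  | some _,  none,   some _ => 0
  | some _,  none,   none   => 2
  | none,    some _, some _ => 0
  | none,    some _, none   => -3
  | none,    none,   some _ => 1
  | none,    none,   none   => 1

/-- Payoff to Player 3 in G₁. -/
def pay3G1 (a : Fin ℓ → Fin (n+1) → Fin (n+1) → ℤ) :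
    Option (Bool × Fin ℓ) → Option (Fin (n+1)) → Option (Fin (n+1)) → ℝ
  | some sk, some i, some j => pay23 a sk i j
  | some _,  some _, none   => 0
  | some _,  none,   some _ => -1
  | some _,  none,   none   => 2
  | none,    some _, some _ => 0
  | none,    some _, none   => 1
  | none,    none,   some _ => -3
  | none,    none,   none   => 1

/-- Expected payoff in G₁ for a payoff table `f` under a mixed profile (z,x,y). -/
def EG1 (f : Option (Bool × Fin ℓ) → Option (Fin (n+1)) → Option (Fin (n+1)) → ℝ)
    (z : Option (Bool × Fin ℓ) → ℝ) (x y : Option (Fin (n+1)) → ℝ) : ℝ :=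
  ∑ o1, ∑ o2, ∑ o3, z o1 * x o2 * y o3 * f o1 o2 o3

/-- `(z,x,y)` is a (mixed) Nash equilibrium of G₁. -/
def G1NE (a : Fin ℓ → Fin (n+1) → Fin (n+1) → ℤ)
    (z : Option (Bool × Fin ℓ) → ℝ) (x y : Option (Fin (n+1)) → ℝ) : Prop :=
  IsDist z ∧ IsDist x ∧ IsDist y ∧
  (∀ z', IsDist z' → EG1 (pay1G1 a) z' x y ≤ EG1 (pay1G1 a) z x y) ∧
  (∀ x', IsDist x' → EG1 (pay2G1 a) z x' y ≤ EG1 (pay2G1 a) z x y) ∧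
  (∀ y', IsDist y' → EG1 (pay3G1 a) z x y' ≤ EG1 (pay3G1 a) z x y)

/-- The pure strategy ⊥ as a mixed strategy. -/
def deltaBot {α : Type*} [DecidableEq α] : Option α → ℝ :=
  fun o => if o = none then 1 else 0

end

noncomputable section
open Finset
variable {n ℓ : ℕ}

-- ============ auxiliary lemmas ============

lemma EG1_decomp (f : Option (Bool × Fin ℓ) → Option (Fin (n+1)) → Option (Fin (n+1)) → ℝ)
    (g : Bool × Fin ℓ → Fin (n+1) → Fin (n+1) → ℝ)
    (cssn csns csnn cnss cnsn cnns cnnn : ℝ)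
    (h1 : ∀ sk i j, f (some sk) (some i) (some j) = g sk i j)
    (h2 : ∀ sk i, f (some sk) (some i) none = cssn)
    (h3 : ∀ sk j, f (some sk) none (some j) = csns)
    (h4 : ∀ sk, f (some sk) none none = csnn)
    (h5 : ∀ i j, f none (some i) (some j) = cnss)
    (h6 : ∀ i, f none (some i) none = cnsn)
    (h7 : ∀ j, f none none (some j) = cnns)
    (h8 : f none none none = cnnn)
    (z : Option (Bool × Fin ℓ) → ℝ) (x y : Option (Fin (n+1)) → ℝ) :
    EG1 f z x y = Eg g (fun sk => z (some sk)) (fun i => x (some i)) (fun j => y (some j))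
      + (∑ sk, z (some sk)) * (∑ i, x (some i)) * y none * cssn
      + (∑ sk, z (some sk)) * x none * (∑ j, y (some j)) * csns
      + (∑ sk, z (some sk)) * x none * y none * csnn
      + z none * (∑ i, x (some i)) * (∑ j, y (some j)) * cnss
      + z none * (∑ i, x (some i)) * y none * cnsn
      + z none * x none * (∑ j, y (some j)) * cnns
      + z none * x none * y none * cnnn := by
  simp only [EG1, Eg, Fintype.sum_option, h1, h2, h3, h4, h5, h6, h7, h8,
    Finset.sum_add_distrib]
  simp only [← Finset.sum_mul, ← Finset.mul_sum]
  ring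

lemma dec1 (a : Fin ℓ → Fin (n+1) → Fin (n+1) → ℤ)
    (z : Option (Bool × Fin ℓ) → ℝ) (x y : Option (Fin (n+1)) → ℝ) :
    EG1 (pay1G1 a) z x y = Eg (pay1 a) (fun sk => z (some sk)) (fun i => x (some i)) (fun j => y (some j))
      + (∑ sk, z (some sk)) * (∑ i, x (some i)) * y none * 1
      + (∑ sk, z (some sk)) * x none * (∑ j, y (some j)) * 1
      + (∑ sk, z (some sk)) * x none * y none * (-4)
      + z none * (∑ i, x (some i)) * (∑ j, y (some j)) * 0
      + z none * (∑ i, x (some i)) * y none * 2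
      + z none * x none * (∑ j, y (some j)) * 2
      + z none * x none * y none * (-2) :=
  EG1_decomp _ _ _ _ _ _ _ _ _ (fun _ _ _ => rfl) (fun _ _ => rfl) (fun _ _ => rfl)
    (fun _ => rfl) (fun _ _ => rfl) (fun _ => rfl) (fun _ => rfl) rfl z x y

lemma dec2 (a : Fin ℓ → Fin (n+1) → Fin (n+1) → ℤ)
    (z : Option (Bool × Fin ℓ) → ℝ) (x y : Option (Fin (n+1)) → ℝ) :
    EG1 (pay2G1 a) z x y = Eg (pay23 a) (fun sk => z (some sk)) (fun i => x (some i)) (fun j => y (some j))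
      + (∑ sk, z (some sk)) * (∑ i, x (some i)) * y none * (-1)
      + (∑ sk, z (some sk)) * x none * (∑ j, y (some j)) * 0
      + (∑ sk, z (some sk)) * x none * y none * 2
      + z none * (∑ i, x (some i)) * (∑ j, y (some j)) * 0
      + z none * (∑ i, x (some i)) * y none * (-3)
      + z none * x none * (∑ j, y (some j)) * 1
      + z none * x none * y none * 1 :=
  EG1_decomp _ _ _ _ _ _ _ _ _ (fun _ _ _ => rfl) (fun _ _ => rfl) (fun _ _ => rfl)
    (fun _ => rfl) (fun _ _ => rfl) (fun _ => rfl) (fun _ => rfl) rfl z x y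

lemma dec3 (a : Fin ℓ → Fin (n+1) → Fin (n+1) → ℤ)
    (z : Option (Bool × Fin ℓ) → ℝ) (x y : Option (Fin (n+1)) → ℝ) :
    EG1 (pay3G1 a) z x y = Eg (pay23 a) (fun sk => z (some sk)) (fun i => x (some i)) (fun j => y (some j))
      + (∑ sk, z (some sk)) * (∑ i, x (some i)) * y none * 0
      + (∑ sk, z (some sk)) * x none * (∑ j, y (some j)) * (-1)
      + (∑ sk, z (some sk)) * x none * y none * 2
      + z none * (∑ i, x (some i)) * (∑ j, y (some j)) * 0
      + z none * (∑ i, x (some i)) * y none * 1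
      + z none * x none * (∑ j, y (some j)) * (-3)
      + z none * x none * y none * 1 :=
  EG1_decomp _ _ _ _ _ _ _ _ _ (fun _ _ _ => rfl) (fun _ _ => rfl) (fun _ _ => rfl)
    (fun _ => rfl) (fun _ _ => rfl) (fun _ => rfl) (fun _ => rfl) rfl z x y

lemma Eg_pay23_eq (a : Fin ℓ → Fin (n+1) → Fin (n+1) → ℤ)
    (z : Bool × Fin ℓ → ℝ) (x y : Fin (n+1) → ℝ) :
    Eg (pay23 a) z x y = -(1/2) * Eg (pay1 a) z x y := by
  unfold Eg
  rw [Finset.mul_sum]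
  refine Finset.sum_congr rfl fun sk _ => ?_
  rw [Finset.mul_sum]
  refine Finset.sum_congr rfl fun i _ => ?_
  rw [Finset.mul_sum]
  refine Finset.sum_congr rfl fun j _ => ?_
  unfold pay1 pay23
  ring

lemma EG1_zero_sum (a : Fin ℓ → Fin (n+1) → Fin (n+1) → ℤ)
    (z : Option (Bool × Fin ℓ) → ℝ) (x y : Option (Fin (n+1)) → ℝ) :
    EG1 (pay1G1 a) z x y + EG1 (pay2G1 a) z x y + EG1 (pay3G1 a) z x y = 0 := by
  have hp : ∀ o1 o2 o3, pay1G1 a o1 o2 o3 + pay2G1 a o1 o2 o3 + pay3G1 a o1 o2 o3 = 0 := by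
    rintro (_|sk) (_|i) (_|j) <;> simp [pay1G1, pay2G1, pay3G1, pay1, pay23] <;> ring
  unfold EG1
  rw [← Finset.sum_add_distrib, ← Finset.sum_add_distrib]
  refine Finset.sum_eq_zero fun o1 _ => ?_
  rw [← Finset.sum_add_distrib, ← Finset.sum_add_distrib]
  refine Finset.sum_eq_zero fun o2 _ => ?_
  rw [← Finset.sum_add_distrib, ← Finset.sum_add_distrib]
  refine Finset.sum_eq_zero fun o3 _ => ?_
  have := hp o1 o2 o3
  linear_combination (z o1 * x o2 * y o3) * this

lemma key_ineq (p q r : ℝ) (hp0 : 0 ≤ p) (hp1 : p ≤ 1) (hq0 : 0 ≤ q) (hq1 : q ≤ 1)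
    (hr0 : 0 ≤ r) (hr1 : r ≤ 1)
    (hF : 4*q + 4*r - 6*(q*r) + 2*p*(1-q-r) ≤ 0) :
    (p = 0 ∧ q = 0 ∧ r = 0) ∨ (p = 1 ∧ q = 1 ∧ r = 1) := by
  rcases le_or_gt (q + r) 1 with hs | hs
  · left
    have f1 : 0 ≤ p * (1 - q - r) := mul_nonneg hp0 (by linarith)
    have f2 : 0 ≤ q * (1 - r) := mul_nonneg hq0 (by linarith)
    have f3 : 0 ≤ r * (1 - q) := mul_nonneg hr0 (by linarith)
    have hq : q = 0 := le_antisymm (by nlinarith) hq0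
    have hr : r = 0 := le_antisymm (by nlinarith) hr0
    refine ⟨le_antisymm ?_ hp0, hq, hr⟩
    nlinarith
  · right
    have f1 : 0 ≤ (1 - p) * (q + r - 1) := mul_nonneg (by linarith) (by linarith)
    have f2 : 0 ≤ (q - r)^2 := sq_nonneg _
    have hs2 : 2 ≤ q + r := by nlinarith
    have hq : q = 1 := le_antisymm hq1 (by linarith)
    have hr : r = 1 := le_antisymm hr1 (by linarith)
    refine ⟨le_antisymm hp1 ?_, hq, hr⟩
    nlinarith

lemma numeric (P Q R A U1 U2 U3 zn xn yn : ℝ)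
    (hzs : zn + P = 1) (hxs : xn + Q = 1) (hys : yn + R = 1)
    (hP0 : 0 ≤ P) (hQ0 : 0 ≤ Q) (hR0 : 0 ≤ R)
    (hzn0 : 0 ≤ zn) (hxn0 : 0 ≤ xn) (hyn0 : 0 ≤ yn)
    (hU1 : U1 = A + P*Q*yn*1 + P*xn*R*1 + P*xn*yn*(-4) + zn*Q*R*0 + zn*Q*yn*2
      + zn*xn*R*2 + zn*xn*yn*(-2))
    (hU2 : U2 = -(1/2)*A + P*Q*yn*(-1) + P*xn*R*0 + P*xn*yn*2 + zn*Q*R*0 + zn*Q*yn*(-3)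
      + zn*xn*R*1 + zn*xn*yn*1)
    (hU3 : U3 = -(1/2)*A + P*Q*yn*0 + P*xn*R*(-1) + P*xn*yn*2 + zn*Q*R*0 + zn*Q*yn*1
      + zn*xn*R*(-3) + zn*xn*yn*1)
    (hL1 : Q*yn*2 + xn*R*2 + xn*yn*(-2) ≤ U1)
    (hL2 : P*yn*2 + zn*R + zn*yn ≤ U2)
    (hL3 : P*xn*2 + zn*Q + zn*xn ≤ U3) :
    (P = 0 ∧ Q = 0 ∧ R = 0) ∨
    (P = 1 ∧ Q = 1 ∧ R = 1 ∧ zn = 0 ∧ xn = 0 ∧ yn = 0 ∧ A = 0 ∧ U1 = 0 ∧ U2 = 0 ∧ U3 = 0) := by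
  have hzn : zn = 1 - P := by linarith
  have hxn : xn = 1 - Q := by linarith
  have hyn : yn = 1 - R := by linarith
  subst hzn hxn hyn
  have hP1 : P ≤ 1 := by linarith
  have hQ1 : Q ≤ 1 := by linarith
  have hR1 : R ≤ 1 := by linarith
  have hsum : U1 + U2 + U3 = 0 := by rw [hU1, hU2, hU3]; ring
  have hF : 4*Q + 4*R - 6*(Q*R) + 2*P*(1-Q-R) ≤ 0 := by nlinarith [hL1, hL2, hL3, hsum]
  rcases key_ineq P Q R hP0 hP1 hQ0 hQ1 hR0 hR1 hF with ⟨h1, h2, h3⟩ | ⟨h1, h2, h3⟩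
  · exact Or.inl ⟨h1, h2, h3⟩
  · subst h1; subst h2; subst h3
    have hA1 : U1 = A := by rw [hU1]; ring
    have hA2 : U2 = -(1/2)*A := by rw [hU2]; ring
    have hA3 : U3 = -(1/2)*A := by rw [hU3]; ring
    have hU1ge : 0 ≤ U1 := by nlinarith [hL1]
    have hU2ge : 0 ≤ U2 := by nlinarith [hL2]
    have hA : A = 0 := by nlinarith
    refine Or.inr ⟨rfl, rfl, rfl, by norm_num, by norm_num, by norm_num, hA, by rw [hA1, hA], by rw [hA2, hA]; ring, by rw [hA3, hA]; ring⟩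

def liftD {α : Type*} (w : α → ℝ) : Option α → ℝ
  | none => 0
  | some a => w a

@[simp] lemma liftD_none {α : Type*} (w : α → ℝ) : liftD w none = 0 := rfl
@[simp] lemma liftD_some {α : Type*} (w : α → ℝ) (a : α) : liftD w (some a) = w a := rfl

lemma liftD_isDist {α : Type*} [Fintype α] {w : α → ℝ} (hw : IsDist w) : IsDist (liftD w) := by
  constructor
  · rintro (_|i)
    · simp
    · simpa using hw.1 i
  · rw [Fintype.sum_option]; simp [hw.2]

lemma deltaBot_isDist {α : Type*} [Fintype α] [DecidableEq α] : IsDist (deltaBot (α := α)) := by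
  constructor
  · intro o; unfold deltaBot; split <;> norm_num
  · rw [Fintype.sum_option]; simp [deltaBot]

lemma dist_option {α : Type*} [Fintype α] {z : Option α → ℝ} (hz : IsDist z) :
    z none + ∑ a, z (some a) = 1 := by
  rw [← Fintype.sum_option]; exact hz.2

end

/-- (⊥,⊥,⊥) is a Nash equilibrium of G₁, and every other Nash equilibrium of G₁
puts no weight on ⊥ and induces a Nash equilibrium of G₀ in which every player
receives payoff 0. -/
theorem stmt18 {n ℓ : ℕ} (hℓ : 0 < ℓ) (a : Fin ℓ → Fin (n+1) → Fin (n+1) → ℤ) :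
    G1NE a deltaBot deltaBot deltaBot ∧
    (∀ (z : Option (Bool × Fin ℓ) → ℝ) (x y : Option (Fin (n+1)) → ℝ),
      G1NE a z x y → ¬ (z = deltaBot ∧ x = deltaBot ∧ y = deltaBot) →
      z none = 0 ∧ x none = 0 ∧ y none = 0 ∧
      G0NE a (fun sk => z (some sk)) (fun i => x (some i)) (fun j => y (some j)) ∧
      Eg (pay1 a) (fun sk => z (some sk)) (fun i => x (some i)) (fun j => y (some j)) = 0 ∧
      Eg (pay23 a) (fun sk => z (some sk)) (fun i => x (some i)) (fun j => y (some j)) = 0) := by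
  constructor
  · refine ⟨deltaBot_isDist, deltaBot_isDist, deltaBot_isDist, ?_, ?_, ?_⟩
    · intro z' hz'
      have h1 := dist_option hz'
      have h2 : 0 ≤ ∑ sk, z' (some sk) := Finset.sum_nonneg fun sk _ => hz'.1 _
      rw [dec1, dec1]
      simp [Eg, deltaBot]
      linarith
    · intro x' hx'
      have h1 := dist_option hx'
      have h2 : 0 ≤ ∑ i, x' (some i) := Finset.sum_nonneg fun i _ => hx'.1 _
      rw [dec2, dec2]
      simp [Eg, deltaBot]
      linarith
    · intro y' hy'
      have h1 := dist_option hy'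
      have h2 : 0 ≤ ∑ j, y' (some j) := Finset.sum_nonneg fun j _ => hy'.1 _
      rw [dec3, dec3]
      simp [Eg, deltaBot]
      linarith
  · intro z x y hNE hne
    obtain ⟨hz, hx, hy, b1, b2, b3⟩ := hNE
    have hzs := dist_option hz
    have hxs := dist_option hx
    have hys := dist_option hy
    have hP0 : 0 ≤ ∑ sk, z (some sk) := Finset.sum_nonneg fun sk _ => hz.1 _
    have hQ0 : 0 ≤ ∑ i, x (some i) := Finset.sum_nonneg fun i _ => hx.1 _
    have hR0 : 0 ≤ ∑ j, y (some j) := Finset.sum_nonneg fun j _ => hy.1 _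
    have hU1 := dec1 a z x y
    have hU2 := dec2 a z x y
    have hU3 := dec3 a z x y
    rw [Eg_pay23_eq] at hU2 hU3
    have hL1 : (∑ i, x (some i)) * y none * 2 + x none * (∑ j, y (some j)) * 2
        + x none * y none * (-2) ≤ EG1 (pay1G1 a) z x y := by
      have hb := b1 deltaBot deltaBot_isDist
      rw [dec1 a deltaBot x y] at hb
      simp only [Eg, deltaBot] at hb
      simp at hb
      linarith
    have hL2 : (∑ sk, z (some sk)) * y none * 2 + z none * (∑ j, y (some j))
        + z none * y none ≤ EG1 (pay2G1 a) z x y := by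
      have hb := b2 deltaBot deltaBot_isDist
      rw [dec2 a z deltaBot y] at hb
      simp only [Eg, deltaBot] at hb
      simp at hb
      linarith
    have hL3 : (∑ sk, z (some sk)) * x none * 2 + z none * (∑ i, x (some i))
        + z none * x none ≤ EG1 (pay3G1 a) z x y := by
      have hb := b3 deltaBot deltaBot_isDist
      rw [dec3 a z x deltaBot] at hb
      simp only [Eg, deltaBot] at hb
      simp at hb
      linarith
    rcases numeric (∑ sk, z (some sk)) (∑ i, x (some i)) (∑ j, y (some j))
        (Eg (pay1 a) (fun sk => z (some sk)) (fun i => x (some i)) (fun j => y (some j)))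
        (EG1 (pay1G1 a) z x y) (EG1 (pay2G1 a) z x y) (EG1 (pay3G1 a) z x y)
        (z none) (x none) (y none) hzs hxs hys hP0 hQ0 hR0
        (hz.1 none) (hx.1 none) (hy.1 none) hU1 hU2 hU3 hL1 hL2 hL3 with
      ⟨hP, hQ, hR⟩ | ⟨hP, hQ, hR, hzn, hxn, hyn, hA, hU1z, hU2z, hU3z⟩
    · exfalso
      apply hne
      refine ⟨?_, ?_, ?_⟩
      · funext o
        cases o with
        | none => simp [deltaBot]; linarith
        | some sk =>
          simp only [deltaBot, reduceIte]
          exact (Finset.sum_eq_zero_iff_of_nonneg (fun i _ => hz.1 (some i))).mp hP sk (mem_univ sk)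
      · funext o
        cases o with
        | none => simp [deltaBot]; linarith
        | some i =>
          simp only [deltaBot, reduceIte]
          exact (Finset.sum_eq_zero_iff_of_nonneg (fun i _ => hx.1 (some i))).mp hQ i (mem_univ i)
      · funext o
        cases o with
        | none => simp [deltaBot]; linarith
        | some j =>
          simp only [deltaBot, reduceIte]
          exact (Finset.sum_eq_zero_iff_of_nonneg (fun i _ => hy.1 (some i))).mp hR j (mem_univ j)
    · refine ⟨hzn, hxn, hyn,
        ⟨⟨fun sk => hz.1 _, hP⟩, ⟨fun i => hx.1 _, hQ⟩, ⟨fun j => hy.1 _, hR⟩, ?_, ?_, ?_⟩,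
        hA, by rw [Eg_pay23_eq, hA]; ring⟩
      · intro z' hz'
        have hb := b1 (liftD z') (liftD_isDist hz')
        rw [dec1 a (liftD z') x y, hU1z] at hb
        simp only [liftD_none, liftD_some] at hb
        rw [hxn, hyn] at hb
        rw [hA]
        linarith
      · intro x' hx'
        have hb := b2 (liftD x') (liftD_isDist hx')
        rw [dec2 a z (liftD x') y, hU2z] at hb
        simp only [liftD_none, liftD_some] at hb
        rw [hzn, hyn] at hb
        have hr : Eg (pay23 a) (fun sk => z (some sk)) (fun i => x (some i)) (fun j => y (some j)) = 0 := by
          rw [Eg_pay23_eq, hA]; ring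
        rw [hr]
        linarith
      · intro y' hy'
        have hb := b3 (liftD y') (liftD_isDist hy')
        rw [dec3 a z x (liftD y'), hU3z] at hb
        simp only [liftD_none, liftD_some] at hb
        rw [hzn, hxn] at hb
        have hr : Eg (pay23 a) (fun sk => z (some sk)) (fun i => x (some i)) (fun j => y (some j)) = 0 := by
          rw [Eg_pay23_eq, hA]; ring
        rw [hr]
        linarith
end
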